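/- Key step of Corollary 2 (equal model multipliers and scaled minimizers when the resource capacity is zero): let F : ℝ^n → ℝ be differentiable, μ, L > 0, b₀ ∈ ℝ^n, and A ∈ ℝ^{m×n} with nonzero j-th row a_j. Suppose (q̲, λ̲) and (q̄, λ̄) satisfy μ q̲ + ∇F(0) + b₀ + Aᵀλ̲ = 0 and L q̄ + ∇F(0) + b₀ + Aᵀλ̄ = 0, with λ̲_l = λ̄_l = 0 for every l ≠ j, λ̲_j ≥ 0, λ̄_j ≥ 0, and tightness with zero right-hand side: ⟨a_j, q̲⟩ = 0 and ⟨a_j, q̄⟩ = 0. Then λ̲ = λ̄ and μ q̲ = L q̄; in particular μ‖q̲‖ = L‖q̄‖. -/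

import Mathlib

open scoped RealInnerProductSpace

/-- `Aᵀ λ = ∑ l, λ_l a_l` where `a_l` is the `l`-th row of `A`, as a Euclidean vector. -/
noncomputable def transMul {m n : ℕ} (A : Matrix (Fin m) (Fin n) ℝ) (lam : Fin m → ℝ) :
    EuclideanSpace ℝ (Fin n) :=
  WithLp.toLp 2 (fun i => ∑ l, lam l * A l i)

/-- The `j`-th row of `A` regarded as a Euclidean vector. -/
noncomputable def rowVec {m n : ℕ} (A : Matrix (Fin m) (Fin n) ℝ) (j : Fin m) :
    EuclideanSpace ℝ (Fin n) :=
  WithLp.toLp 2 (fun i => A j i)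

/-!
Both stationarity equations decompose the same vector `-(∇F(0) + b₀)` as a vector orthogonal
to `a_j` (namely `μ q̲`, resp. `L q̄`) plus a multiple of `a_j` (namely `λ̲_j a_j`, resp.
`λ̄_j a_j`). Since `a_j ≠ 0`, such a decomposition is unique.
-/

lemma transMul_eq_smul_rowVec {m n : ℕ} (A : Matrix (Fin m) (Fin n) ℝ) {lam : Fin m → ℝ}
    {j : Fin m} (h : ∀ l, l ≠ j → lam l = 0) :
    transMul A lam = lam j • rowVec A j := by
  ext i
  change ∑ l, lam l * A l i = lam j * A j i
  exact Finset.sum_eq_single_of_mem j (Finset.mem_univ j) fun l _ hl => by rw [h l hl, zero_mul]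

lemma eq_and_eq_of_add_smul_eq_add_smul {E : Type*} [NormedAddCommGroup E]
    [InnerProductSpace ℝ E] {a x y : E} {c d : ℝ} (ha : a ≠ 0) (hx : ⟪a, x⟫ = 0)
    (hy : ⟪a, y⟫ = 0) (h : x + c • a = y + d • a) : x = y ∧ c = d := by
  have hinner : c * ⟪a, a⟫ = d * ⟪a, a⟫ := by
    simpa [inner_add_right, inner_smul_right, hx, hy, mul_comm] using congrArg (⟪a, ·⟫) h
  have hcd : c = d := mul_right_cancel₀ (inner_self_ne_zero.mpr ha) hinner
  subst hcd
  exact ⟨add_right_cancel h, rfl⟩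

theorem corollary_two_key_step_general
    (n m : ℕ) (F : EuclideanSpace ℝ (Fin n) → ℝ)
    (μ L : ℝ) (hμ : 0 < μ) (hL : 0 < L)
    (b0 qlow qup : EuclideanSpace ℝ (Fin n))
    (A : Matrix (Fin m) (Fin n) ℝ) (j : Fin m) (haj : rowVec A j ≠ 0)
    (lamlow lamup : Fin m → ℝ)
    (hstatlow : μ • qlow + gradient F 0 + b0 + transMul A lamlow = 0)
    (hstatup : L • qup + gradient F 0 + b0 + transMul A lamup = 0)
    (hcs : ∀ l, l ≠ j → lamlow l = 0 ∧ lamup l = 0)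
    (htightlow : ⟪rowVec A j, qlow⟫ = 0)
    (htightup : ⟪rowVec A j, qup⟫ = 0) :
    lamlow = lamup ∧ μ • qlow = L • qup ∧ μ * ‖qlow‖ = L * ‖qup‖ := by
  have hsplit : μ • qlow + lamlow j • rowVec A j = L • qup + lamup j • rowVec A j := by
    rw [← transMul_eq_smul_rowVec A fun l hl => (hcs l hl).1,
      ← transMul_eq_smul_rowVec A fun l hl => (hcs l hl).2]
    linear_combination (norm := module) hstatlow - hstatup
  obtain ⟨hq, hj⟩ := eq_and_eq_of_add_smul_eq_add_smul haj
    (by rw [inner_smul_right, htightlow, mul_zero]) (by rw [inner_smul_right, htightup, mul_zero])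
    hsplit
  refine ⟨funext fun l => ?_, hq, ?_⟩
  · by_cases hl : l = j
    · exact hl ▸ hj
    · rw [(hcs l hl).1, (hcs l hl).2]
  · simpa [norm_smul, abs_of_pos hμ, abs_of_pos hL] using congrArg norm hq

/-- Key step of Corollary 2 (equal model multipliers and scaled minimizers when the
resource capacity is zero): with the stationarity conditions, anchored at `0`, of the
lower and upper model problems, vanishing of multiplier components other than the `j`-th,
nonnegativity of the `j`-th multipliers, and tightness with zero right-hand side,
one gets `λ̲ = λ̄`, `μ q̲ = L q̄`, and in particular `μ‖q̲‖ = L‖q̄‖`. -/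
theorem corollary_two_key_step
    (n m : ℕ) (F : EuclideanSpace ℝ (Fin n) → ℝ) (hF : Differentiable ℝ F)
    (μ L : ℝ) (hμ : 0 < μ) (hL : 0 < L)
    (b0 qlow qup : EuclideanSpace ℝ (Fin n))
    (A : Matrix (Fin m) (Fin n) ℝ) (j : Fin m) (haj : rowVec A j ≠ 0)
    (lamlow lamup : Fin m → ℝ)
    (hstatlow : μ • qlow + gradient F 0 + b0 + transMul A lamlow = 0)
    (hstatup : L • qup + gradient F 0 + b0 + transMul A lamup = 0)
    (hcs : ∀ l, l ≠ j → lamlow l = 0 ∧ lamup l = 0)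
    (hlamlowj : 0 ≤ lamlow j) (hlamupj : 0 ≤ lamup j)
    (htightlow : ⟪rowVec A j, qlow⟫ = 0)
    (htightup : ⟪rowVec A j, qup⟫ = 0) :
    lamlow = lamup ∧ μ • qlow = L • qup ∧ μ * ‖qlow‖ = L * ‖qup‖ :=
  corollary_two_key_step_general n m F μ L hμ hL b0 qlow qup A j haj lamlow lamup hstatlow hstatup
    hcs htightlow htightup
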